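/- arXiv:math/0502019 — 6 statements merged into one kernel-verified Lean document; each statement's English description precedes it below -/
import Mathlib

section
/- Let q be a real number with 0 < q < 1 and let x be any real number. Then for every integer n ≥ 0, the q-Bernoulli polynomial satisfies the addition formula β_n(x:q) = Σ_{l=0}^{n} C(n,l) · q^{l·x} · β_l(q) · [x]_q^{n−l}, where C(n,l) is the binomial coefficient. -/
/-!
Since `[m + x]_q = [x]_q + q^x [m]_q`, the binomial theorem expands each term of the series in
`β_{n+1}(x:q)` into the series of the `β_{l+1}(q)`, `l ≤ n`; with `n·C(n-1, l) = (l+1)·C(n, l+1)`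
this is the addition formula for the defect `(q-1)/log q·(1-q)^{-n} - β_n(x:q)`. The leading
term `(1-q)^{-n} = (q^x/(1-q) + [x]_q)^n` satisfies it too, by the binomial theorem again.
-/

open Finset

/-- The q-analogue `[z]_q = (1 - q^z)/(1 - q)` for a real exponent `z`. -/
noncomputable def qn (q z : ℝ) : ℝ := (1 - q ^ z) / (1 - q)

/-- The q-Bernoulli polynomial `β_n(x:q)`:
`β_0(x:q) = (q-1)/log q` and, for `n ≥ 1`,
`β_n(x:q) = ((q-1)/log q)·(1-q)^{-n} - n·Σ_{m≥0} q^{m+x}·[m+x]_q^{n-1}`. -/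
noncomputable def qB (q x : ℝ) : ℕ → ℝ
  | 0 => (q - 1) / Real.log q
  | n + 1 => (q - 1) / Real.log q * ((1 - q) ^ (n + 1))⁻¹
      - ((n : ℝ) + 1) * ∑' m : ℕ, q ^ ((m : ℝ) + x) * qn q ((m : ℝ) + x) ^ n

lemma qn_add {q : ℝ} (hq : 0 < q) (x y : ℝ) : qn q (x + y) = qn q x + q ^ x * qn q y := by
  unfold qn
  rw [Real.rpow_add hq]
  ring

lemma rpow_mul_inv_one_sub_add_qn (q x : ℝ) : q ^ x * (1 - q)⁻¹ + qn q x = (1 - q)⁻¹ := by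
  unfold qn
  ring

lemma abs_qn_natCast_le {q : ℝ} (hq0 : 0 ≤ q) (hq1 : q < 1) (m : ℕ) : |qn q m| ≤ (1 - q)⁻¹ := by
  have hqm : q ^ m ≤ 1 := pow_le_one₀ hq0 hq1.le
  rw [qn, Real.rpow_natCast, abs_div, abs_of_nonneg (by linarith), abs_of_pos (by linarith),
    div_eq_mul_inv]
  exact mul_le_of_le_one_left (inv_nonneg.2 (by linarith)) (by linarith [pow_nonneg hq0 m])

lemma summable_rpow_mul_qn_pow {q : ℝ} (hq0 : 0 ≤ q) (hq1 : q < 1) (l : ℕ) :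
    Summable fun m : ℕ => q ^ (m : ℝ) * qn q m ^ l := by
  refine .of_norm_bounded ((summable_geometric_of_lt_one hq0 hq1).mul_right ((1 - q)⁻¹ ^ l))
    fun m => ?_
  rw [norm_mul, norm_pow, Real.norm_eq_abs, Real.norm_eq_abs, Real.rpow_natCast,
    abs_of_nonneg (pow_nonneg hq0 m)]
  gcongr
  exact abs_qn_natCast_le hq0 hq1 m

noncomputable def qBSeries (q x : ℝ) (n : ℕ) : ℝ :=
  ∑' m : ℕ, q ^ ((m : ℝ) + x) * qn q ((m : ℝ) + x) ^ n

lemma qBSeries_eq_sum {q : ℝ} (hq0 : 0 < q) (hq1 : q < 1) (x : ℝ) (n : ℕ) :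
    qBSeries q x n = ∑ l ∈ range (n + 1),
      (n.choose l : ℝ) * q ^ (((l + 1 : ℕ) : ℝ) * x) * qn q x ^ (n - l) * qBSeries q 0 l := by
  have hterm (m : ℕ) : q ^ ((m : ℝ) + x) * qn q ((m : ℝ) + x) ^ n = ∑ l ∈ range (n + 1),
      (n.choose l : ℝ) * q ^ (((l + 1 : ℕ) : ℝ) * x) * qn q x ^ (n - l) *
        (q ^ (m : ℝ) * qn q m ^ l) := by
    rw [add_comm (m : ℝ), qn_add hq0, Real.rpow_add hq0, add_comm (qn q x), add_pow, mul_sum]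
    refine sum_congr rfl fun l _ => ?_
    rw [mul_comm _ x, Real.rpow_mul_natCast hq0.le, pow_succ]
    ring
  simp only [qBSeries, add_zero, tsum_congr hterm, ← tsum_mul_left]
  exact (Summable.tsum_finsetSum fun l _ =>
    (summable_rpow_mul_qn_pow hq0.le hq1 l).mul_left _)

noncomputable def qBDefect (q x : ℝ) (n : ℕ) : ℝ :=
  (q - 1) / Real.log q * ((1 - q) ^ n)⁻¹ - qB q x n

lemma qB_eq_sub_qBDefect (q x : ℝ) (n : ℕ) :
    qB q x n = (q - 1) / Real.log q * ((1 - q) ^ n)⁻¹ - qBDefect q x n :=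
  (sub_sub_cancel _ _).symm

lemma qBDefect_zero (q x : ℝ) : qBDefect q x 0 = 0 := by
  simp [qBDefect, qB]

lemma qBDefect_succ (q x : ℝ) (n : ℕ) : qBDefect q x (n + 1) = (n + 1) * qBSeries q x n := by
  simp only [qBDefect, qB, qBSeries]
  ring

lemma qBDefect_addition_formula {q : ℝ} (hq0 : 0 < q) (hq1 : q < 1) (x : ℝ) (n : ℕ) :
    qBDefect q x n = ∑ l ∈ range (n + 1),
      (n.choose l : ℝ) * q ^ ((l : ℝ) * x) * qBDefect q 0 l * qn q x ^ (n - l) := by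
  cases n with
  | zero => simp [qBDefect_zero]
  | succ n =>
    rw [sum_range_succ', qBDefect_zero, qBDefect_succ, qBSeries_eq_sum hq0 hq1, mul_sum]
    simp only [qBDefect_succ, mul_zero, zero_mul, add_zero, Nat.succ_sub_succ]
    refine sum_congr rfl fun l _ => ?_
    have hchoose : ((n : ℝ) + 1) * n.choose l = (n + 1).choose (l + 1) * ((l : ℝ) + 1) := by
      exact_mod_cast Nat.add_one_mul_choose_eq n l
    linear_combination (q ^ (((l + 1 : ℕ) : ℝ) * x) * qn q x ^ (n - l) * qBSeries q 0 l) * hchoose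

lemma sum_choose_rpow_mul_inv_pow_mul_qn_pow {q : ℝ} (hq : 0 ≤ q) (x : ℝ) (n : ℕ) :
    ∑ l ∈ range (n + 1), (n.choose l : ℝ) * q ^ ((l : ℝ) * x) * ((1 - q) ^ l)⁻¹ * qn q x ^ (n - l)
      = ((1 - q) ^ n)⁻¹ := by
  rw [← inv_pow, ← rpow_mul_inv_one_sub_add_qn q x, add_pow]
  refine sum_congr rfl fun l _ => ?_
  rw [mul_comm (l : ℝ), Real.rpow_mul_natCast hq, mul_pow, inv_pow]
  ring

/-- Addition formula for the q-Bernoulli polynomials: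
`β_n(x:q) = Σ_{l=0}^{n} C(n,l) · q^{l·x} · β_l(q) · [x]_q^{n-l}`. -/
theorem qB_addition_formula (q x : ℝ) (hq0 : 0 < q) (hq1 : q < 1) (n : ℕ) :
    qB q x n = ∑ l ∈ range (n + 1),
      (n.choose l : ℝ) * q ^ ((l : ℝ) * x) * qB q 0 l * qn q x ^ (n - l) := by
  rw [qB_eq_sub_qBDefect, qBDefect_addition_formula hq0 hq1,
    ← sum_choose_rpow_mul_inv_pow_mul_qn_pow hq0.le x n, mul_sum, ← sum_sub_distrib]
  refine sum_congr rfl fun l _ => ?_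
  rw [qB_eq_sub_qBDefect]
  ring
end

section
/- Let q be a real number with 0 < q < 1, let f be a positive integer and χ a nontrivial complex Dirichlet character modulo f. Then for every integer n ≥ 1, the generalized q-Bernoulli number satisfies the distribution relation β_{n,χ}(q) = [f]_q^{n−1} · Σ_{a=1}^{f} χ(a) · β_n(a/f : q^f), where on the right the q-Bernoulli polynomial is formed with q replaced by q^f. -/
open Finset

/-!
Write `m + 1 = f j + (a + 1)` with `0 ≤ a < f`. The character only sees `a`, and the
q-analogue rescales as `[f]_q · [j + (a+1)/f]_{q^f} = [f j + a + 1]_q`, so the series for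
`β_{n,χ}(q)` splits into the `f` series occurring in `β_n((a+1)/f : q^f)`, each multiplied by
`[f]_q^{n-1}`. The constant term of `β_n` does not depend on `a` and is killed by
`Σ_a χ(a) = 0`.
-/

noncomputable def qSummand (q : ℝ) (k : ℕ) (z : ℝ) : ℝ := q ^ z * qn q z ^ k

lemma qB_succ (q x : ℝ) (k : ℕ) :
    qB q x (k + 1) = (q - 1) / Real.log q * ((1 - q) ^ (k + 1))⁻¹
      - ((k : ℝ) + 1) * ∑' m : ℕ, qSummand q k ((m : ℝ) + x) :=
  rfl

lemma qn_nonneg {q : ℝ} (hq0 : 0 < q) (hq1 : q < 1) {z : ℝ} (hz : 0 ≤ z) : 0 ≤ qn q z :=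
  div_nonneg (sub_nonneg.2 (Real.rpow_le_one hq0.le hq1.le hz)) (sub_nonneg.2 hq1.le)

lemma qn_le_inv_one_sub {q : ℝ} (hq0 : 0 ≤ q) (hq1 : q < 1) (z : ℝ) : qn q z ≤ (1 - q)⁻¹ := by
  rw [qn, div_eq_mul_inv]
  exact mul_le_of_le_one_left (inv_nonneg.2 (sub_nonneg.2 hq1.le))
    (sub_le_self _ (Real.rpow_nonneg hq0 z))

lemma summable_qSummand_natCast_add {q : ℝ} (hq0 : 0 < q) (hq1 : q < 1) (k : ℕ) {x : ℝ}
    (hx : 0 ≤ x) :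
    Summable fun m : ℕ => qSummand q k ((m : ℝ) + x) := by
  refine Summable.of_nonneg_of_le (fun m => ?_) (fun m => ?_)
    ((summable_geometric_of_lt_one hq0.le hq1).mul_left (q ^ x * (1 - q)⁻¹ ^ k))
  · have := qn_nonneg hq0 hq1 (by positivity : 0 ≤ (m : ℝ) + x)
    unfold qSummand
    positivity
  · rw [qSummand, Real.rpow_add hq0, Real.rpow_natCast]
    calc q ^ m * q ^ x * qn q (m + x) ^ k ≤ q ^ m * q ^ x * (1 - q)⁻¹ ^ k := by
          gcongr
          · exact qn_nonneg hq0 hq1 (by positivity)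
          · exact qn_le_inv_one_sub hq0.le hq1 _
      _ = q ^ x * (1 - q)⁻¹ ^ k * q ^ m := by ring

lemma qn_mul_qn_pow {q : ℝ} (hq : 0 ≤ q) {f : ℕ} (hqf : q ^ f ≠ 1) (z : ℝ) :
    qn q f * qn (q ^ f) z = qn q (f * z) := by
  have hq1 : 1 - q ≠ 0 := by
    rintro h
    exact hqf (by rw [← sub_eq_zero.1 h, one_pow])
  have hqf' : 1 - q ^ f ≠ 0 := sub_ne_zero.2 hqf.symm
  rw [qn, qn, qn, Real.rpow_natCast, Real.rpow_natCast_mul hq]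
  field_simp

lemma qSummand_pow {q : ℝ} (hq : 0 ≤ q) {f : ℕ} (hqf : q ^ f ≠ 1) (k : ℕ) (z : ℝ) :
    qn q f ^ k * qSummand (q ^ f) k z = qSummand q k (f * z) := by
  rw [qSummand, qSummand, ← Real.rpow_natCast_mul hq, ← qn_mul_qn_pow hq hqf, mul_pow]
  ring

lemma tsum_eq_sum_range_tsum_mul_add {R : Type*} [AddCommGroup R] [UniformSpace R]
    [IsUniformAddGroup R] [CompleteSpace R] [T0Space R] {F : ℕ → R} (hF : Summable F)
    (N : ℕ) [NeZero N] :
    ∑' m, F m = ∑ a ∈ range N, ∑' j, F (N * j + a) := by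
  rw [Nat.sumByResidueClasses hF N]
  refine sum_nbij' ZMod.val (fun a => (a : ZMod N)) (fun j _ => mem_range.2 (ZMod.val_lt j))
    (fun _ _ => mem_univ _) (fun j _ => ZMod.natCast_zmod_val j)
    (fun a ha => ZMod.val_cast_of_lt (mem_range.1 ha)) (fun j _ => ?_)
  simp only [add_comm]

lemma sum_mul_qB_succ_of_sum_eq_zero {ι : Type*} {s : Finset ι} {w : ι → ℂ}
    (hw : ∑ i ∈ s, w i = 0) (q : ℝ) (x : ι → ℝ) (k : ℕ) :
    ∑ i ∈ s, w i * (qB q (x i) (k + 1) : ℂ)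
      = -((k : ℂ) + 1) * ∑ i ∈ s, w i * ((∑' m : ℕ, qSummand q k ((m : ℝ) + x i) : ℝ) : ℂ) := by
  have hterm (i : ι) : w i * (qB q (x i) (k + 1) : ℂ)
      = w i * (((q - 1) / Real.log q * ((1 - q) ^ (k + 1))⁻¹ : ℝ) : ℂ)
        - ((k : ℂ) + 1) * (w i * ((∑' m : ℕ, qSummand q k ((m : ℝ) + x i) : ℝ) : ℂ)) := by
    simp only [qB_succ, Complex.ofReal_sub, Complex.ofReal_mul, Complex.ofReal_add,
      Complex.ofReal_natCast, Complex.ofReal_one]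
    ring
  rw [sum_congr rfl fun i _ => hterm i, sum_sub_distrib, ← sum_mul, hw, ← mul_sum]
  ring

lemma tsum_dirichletCharacter_mul_qSummand {q : ℝ} (hq0 : 0 < q) (hq1 : q < 1) {f : ℕ}
    [NeZero f] (χ : DirichletCharacter ℂ f) (k : ℕ) :
    ∑' m : ℕ, χ ((m + 1 : ℕ) : ZMod f) * (qSummand q k ((m : ℝ) + 1) : ℂ)
      = (qn q f ^ k : ℝ) * ∑ a ∈ range f, χ ((a + 1 : ℕ) : ZMod f)
          * ((∑' j : ℕ, qSummand (q ^ f) k ((j : ℝ) + ((a : ℝ) + 1) / f) : ℝ) : ℂ) := by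
  have hqf : q ^ f ≠ 1 := (pow_lt_one₀ hq0.le hq1 (NeZero.ne f)).ne
  have hsum :
      Summable fun m : ℕ => χ ((m + 1 : ℕ) : ZMod f) * (qSummand q k ((m : ℝ) + 1) : ℂ) := by
    refine Summable.of_norm_bounded (summable_qSummand_natCast_add hq0 hq1 k zero_le_one)
      fun m => ?_
    have hnonneg : 0 ≤ qSummand q k ((m : ℝ) + 1) :=
      mul_nonneg (Real.rpow_nonneg hq0.le _) (pow_nonneg (qn_nonneg hq0 hq1 (by positivity)) k)
    rw [norm_mul, Complex.norm_real, Real.norm_of_nonneg hnonneg]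
    exact mul_le_of_le_one_left hnonneg (χ.norm_le_one _)
  have hperiodic (a j : ℕ) : χ ((f * j + a + 1 : ℕ) : ZMod f) = χ ((a + 1 : ℕ) : ZMod f) := by
    simp
  have hrescale (a j : ℕ) : qSummand q k (((f * j + a : ℕ) : ℝ) + 1)
      = qn q f ^ k * qSummand (q ^ f) k ((j : ℝ) + ((a : ℝ) + 1) / f) := by
    rw [qSummand_pow hq0.le hqf]
    have hf : (f : ℝ) ≠ 0 := Nat.cast_ne_zero.2 (NeZero.ne f)
    congr 1
    push_cast
    field_simp
    ring
  rw [tsum_eq_sum_range_tsum_mul_add hsum f, mul_sum]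
  refine sum_congr rfl fun a _ => ?_
  simp_rw [hperiodic, hrescale]
  rw [Complex.ofReal_tsum, ← tsum_mul_left, ← tsum_mul_left]
  refine tsum_congr fun j => ?_
  push_cast
  ring

theorem generalized_qBernoulli_distribution_general (q : ℝ) (hq0 : 0 < q) (hq1 : q < 1)
    (f : ℕ) (hf : 0 < f) (χ : DirichletCharacter ℂ f)
    (hχ : ∑ a ∈ range f, χ ((a + 1 : ℕ) : ZMod f) = 0)
    (n : ℕ) :
    -(n : ℂ) * ∑' m : ℕ, χ ((m + 1 : ℕ) : ZMod f) * ((q ^ (m + 1) : ℝ) : ℂ)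
        * ((qn q ((m : ℝ) + 1) ^ (n - 1) : ℝ) : ℂ)
      = ((qn q (f : ℝ) ^ (n - 1) : ℝ) : ℂ)
        * ∑ a ∈ range f, χ ((a + 1 : ℕ) : ZMod f)
          * ((qB (q ^ f) (((a : ℝ) + 1) / (f : ℝ)) n : ℝ) : ℂ) := by
  have : NeZero f := ⟨hf.ne'⟩
  cases n with
  | zero => simp only [CharP.cast_eq_zero, neg_zero, zero_mul, qB, ← sum_mul, hχ, mul_zero]
  | succ k =>
    have hsummand (m : ℕ) : ((q ^ (m + 1) : ℝ) : ℂ) * ((qn q ((m : ℝ) + 1) ^ k : ℝ) : ℂ)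
        = (qSummand q k ((m : ℝ) + 1) : ℂ) := by
      rw [qSummand, ← Complex.ofReal_mul, ← Nat.cast_succ, Real.rpow_natCast]
    simp only [Nat.add_sub_cancel, mul_assoc, hsummand]
    rw [tsum_dirichletCharacter_mul_qSummand hq0 hq1 χ k,
      sum_mul_qB_succ_of_sum_eq_zero hχ, Nat.cast_succ]
    ring

/-- Distribution relation for the generalized q-Bernoulli numbers attached to a
nontrivial Dirichlet character `χ` mod `f`:
`β_{n,χ}(q) = [f]_q^{n-1} · Σ_{a=1}^{f} χ(a) · β_n(a/f : q^f)`, where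
`β_{n,χ}(q) = -n·Σ_{m≥1} χ(m)·q^m·[m]_q^{n-1}`. -/
theorem generalized_qBernoulli_distribution (q : ℝ) (hq0 : 0 < q) (hq1 : q < 1)
    (f : ℕ) (hf : 0 < f) (χ : DirichletCharacter ℂ f)
    (hχ : ∑ a ∈ range f, χ ((a + 1 : ℕ) : ZMod f) = 0)
    (n : ℕ) (hn : 1 ≤ n) :
    -(n : ℂ) * ∑' m : ℕ, χ ((m + 1 : ℕ) : ZMod f) * ((q ^ (m + 1) : ℝ) : ℂ)
        * ((qn q ((m : ℝ) + 1) ^ (n - 1) : ℝ) : ℂ)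
      = ((qn q (f : ℝ) ^ (n - 1) : ℝ) : ℂ)
        * ∑ a ∈ range f, χ ((a + 1 : ℕ) : ZMod f)
          * ((qB (q ^ f) (((a : ℝ) + 1) / (f : ℝ)) n : ℝ) : ℂ) :=
  generalized_qBernoulli_distribution_general q hq0 hq1 f hf χ hχ n
end

section
/- Let q be a real number with 0 < q < 1, let f be a positive integer and χ a nontrivial complex Dirichlet character modulo f, and let x ≥ 0 be real. Then for every complex number t, −t · Σ_{n=0}^{∞} χ(n) · q^{n+x} · exp([n+x]_q · t) = (1/[f]_q) · Σ_{a=1}^{f} χ(a) · F_{q^f}( (a+x)/f , [f]_q · t ), i.e. the generating function of the generalized q-Bernoulli polynomials attached to χ is an average of the q^f-Bernoulli generating functions F_{q^f}. -/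
/-!
Write `n ≥ 1` as `n = k f + (a + 1)` with `0 ≤ a < f`. Since `(q^f)^{z/f} = q^z` and
`[z/f]_{q^f} · [f]_q = [z]_q`, the residue class of `a + 1` in the χ-series is exactly the series
inside `F_{q^f}((a+1+x)/f, [f]_q t)`, weighted by `χ(a+1)`. The constant terms
`((Q-1)/log Q)·exp(t/(1-Q))` of the `F_{q^f}` cancel because `Σ χ(a) = 0`, and the term `n = 0`
is absent because nontriviality forces `f ≠ 1`, hence `χ(0) = 0`.
-/

open Finset

/-- The generating function of the q-Bernoulli polynomials (with base `Q`):
`F_Q(y,t) = ((Q-1)/log Q)·exp(t/(1-Q)) - t·Σ_{m≥0} Q^{m+y}·exp([m+y]_Q·t)`. -/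
noncomputable def Fgen (Q y : ℝ) (t : ℂ) : ℂ :=
  (((Q - 1) / Real.log Q : ℝ) : ℂ) * Complex.exp (t / ((1 - Q : ℝ) : ℂ))
    - t * ∑' m : ℕ, ((Q ^ ((m : ℝ) + y) : ℝ) : ℂ)
        * Complex.exp (((qn Q ((m : ℝ) + y) : ℝ) : ℂ) * t)

noncomputable def qTerm (q z : ℝ) (t : ℂ) : ℂ :=
  ((q ^ z : ℝ) : ℂ) * Complex.exp (((qn q z : ℝ) : ℂ) * t)

lemma Fgen_eq_sub_tsum_qTerm (Q y : ℝ) (t : ℂ) :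
    Fgen Q y t = (((Q - 1) / Real.log Q : ℝ) : ℂ) * Complex.exp (t / ((1 - Q : ℝ) : ℂ))
      - t * ∑' m : ℕ, qTerm Q (m + y) t :=
  rfl

lemma sum_mul_Fgen_of_sum_eq_zero {f : ℕ} {w : ℕ → ℂ} (hw : ∑ a ∈ range f, w a = 0)
    (Q : ℝ) (y : ℕ → ℝ) (t : ℂ) :
    ∑ a ∈ range f, w a * Fgen Q (y a) t
      = -(t * ∑ a ∈ range f, w a * ∑' m : ℕ, qTerm Q (m + y a) t) := by
  simp only [Fgen_eq_sub_tsum_qTerm, mul_sub, sum_sub_distrib, ← sum_mul, hw, zero_mul,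
    zero_sub, mul_sum]
  congr 2 with a
  ring

section Rescaling

variable {q : ℝ} (hq : 0 ≤ q) {f : ℕ} (hf : f ≠ 0)
include hq hf

lemma rpow_div_natCast_of_pow (z : ℝ) : (q ^ f) ^ (z / f) = q ^ z := by
  rw [← Real.rpow_natCast_mul hq, mul_div_cancel₀ _ (Nat.cast_ne_zero.2 hf)]

lemma qn_pow_div_mul_qn (hqf : q ^ f ≠ 1) (z : ℝ) : qn (q ^ f) (z / f) * qn q f = qn q z := by
  have : 1 - q ^ f ≠ 0 := sub_ne_zero.2 hqf.symm
  rw [qn, qn, qn, rpow_div_natCast_of_pow hq hf, Real.rpow_natCast]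
  field_simp

lemma qTerm_pow_div (hqf : q ^ f ≠ 1) (z : ℝ) (t : ℂ) :
    qTerm (q ^ f) (z / f) (qn q f * t) = qTerm q z t := by
  rw [qTerm, qTerm, rpow_div_natCast_of_pow hq hf, ← mul_assoc, ← Complex.ofReal_mul,
    qn_pow_div_mul_qn hq hf hqf]

end Rescaling

section Summability

variable {q : ℝ} (hq0 : 0 < q) (hq1 : q < 1)
include hq0 hq1

lemma abs_qn_natCast_add_le (x : ℝ) (n : ℕ) : |qn q (n + x)| ≤ (1 + q ^ x) / (1 - q) := by
  have hle : q ^ ((n : ℝ) + x) ≤ q ^ x :=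
    Real.rpow_le_rpow_of_exponent_ge hq0 hq1.le (by linarith [n.cast_nonneg (α := ℝ)])
  have hpos : 0 ≤ q ^ ((n : ℝ) + x) := Real.rpow_nonneg hq0.le _
  rw [qn, abs_div, abs_of_pos (sub_pos.2 hq1)]
  gcongr
  rw [abs_le]
  constructor <;> linarith

lemma norm_qTerm_natCast_add_le (x : ℝ) (t : ℂ) (n : ℕ) :
    ‖qTerm q (n + x) t‖ ≤ q ^ x * Real.exp ((1 + q ^ x) / (1 - q) * ‖t‖) * q ^ n := by
  have hexp : ‖Complex.exp (((qn q (n + x) : ℝ) : ℂ) * t)‖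
      ≤ Real.exp ((1 + q ^ x) / (1 - q) * ‖t‖) := by
    refine (Complex.norm_exp_le_exp_norm _).trans (Real.exp_le_exp.2 ?_)
    rw [norm_mul, Complex.norm_real, Real.norm_eq_abs]
    exact mul_le_mul_of_nonneg_right (abs_qn_natCast_add_le hq0 hq1 x n) (norm_nonneg t)
  rw [qTerm, norm_mul, Complex.norm_real, Real.norm_of_nonneg (Real.rpow_nonneg hq0.le _),
    Real.rpow_add hq0, Real.rpow_natCast]
  calc _ = q ^ x * ‖Complex.exp (((qn q (n + x) : ℝ) : ℂ) * t)‖ * q ^ n := by ring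
    _ ≤ _ := by gcongr

lemma summable_mul_qTerm (x : ℝ) (t : ℂ) {c : ℕ → ℂ} (hc : ∀ n, ‖c n‖ ≤ 1) :
    Summable fun n : ℕ => c n * qTerm q (n + x) t := by
  refine .of_norm_bounded
    ((summable_geometric_of_lt_one hq0.le hq1).mul_left
      (q ^ x * Real.exp ((1 + q ^ x) / (1 - q) * ‖t‖))) fun n => ?_
  rw [norm_mul]
  exact (mul_le_of_le_one_left (norm_nonneg _) (hc n)).trans
    (norm_qTerm_natCast_add_le hq0 hq1 x t n)

end Summability

lemma tsum_eq_sum_range_tsum_mul_add_s2 {E : Type*} [NormedAddCommGroup E] [CompleteSpace E]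
    {f : ℕ} (hf : f ≠ 0) {g : ℕ → E} (hg : Summable g) :
    ∑' n, g n = ∑ a ∈ range f, ∑' k : ℕ, g (k * f + a) := by
  have : NeZero f := ⟨hf⟩
  let e : Fin f × ℕ ≃ ℕ := ((Nat.divModEquiv f).trans (Equiv.prodComm ℕ (Fin f))).symm
  have hs : Summable fun p => g (e p) := hg.comp_injective e.injective
  rw [← e.tsum_eq g, hs.tsum_prod' hs.prod_factor, tsum_fintype,
    ← Fin.sum_univ_eq_sum_range (fun a => ∑' k : ℕ, g (k * f + a))]
  rfl

lemma DirichletCharacter.ne_one_of_sum_eq_zero {R : Type*} [CommSemiring R] [Nontrivial R] {f : ℕ}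
    {χ : DirichletCharacter R f} (hχ : ∑ a ∈ range f, χ ((a + 1 : ℕ) : ZMod f) = 0) : f ≠ 1 := by
  rintro rfl
  rw [sum_range_one, Nat.cast_one, map_one] at hχ
  exact one_ne_zero hχ

theorem generalized_qBernoulli_generating_function_general (q : ℝ) (hq0 : 0 < q) (hq1 : q < 1)
    (f : ℕ) (hf : 0 < f) (χ : DirichletCharacter ℂ f)
    (hχ : ∑ a ∈ range f, χ ((a + 1 : ℕ) : ZMod f) = 0)
    (x : ℝ) (t : ℂ) :
    -t * ∑' m : ℕ, χ (m : ZMod f) * ((q ^ ((m : ℝ) + x) : ℝ) : ℂ)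
        * Complex.exp (((qn q ((m : ℝ) + x) : ℝ) : ℂ) * t)
      = (1 / ((qn q (f : ℝ) : ℝ) : ℂ))
        * ∑ a ∈ range f, χ ((a + 1 : ℕ) : ZMod f)
          * Fgen (q ^ f) (((a : ℝ) + 1 + x) / (f : ℝ)) (((qn q (f : ℝ) : ℝ) : ℂ) * t) := by
  set g : ℕ → ℂ := fun n => χ n * qTerm q (n + x) t
  have hg : Summable g := summable_mul_qTerm hq0 hq1 x t fun n => χ.norm_le_one _
  have hg0 : g 0 = 0 := by simp [g, χ.map_zero' (χ.ne_one_of_sum_eq_zero hχ)]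
  have hqf : q ^ f ≠ 1 := (pow_lt_one₀ hq0.le hq1 hf.ne').ne
  have hqn : ((qn q f : ℝ) : ℂ) ≠ 0 := by
    rw [qn, Real.rpow_natCast]
    exact_mod_cast div_ne_zero (sub_ne_zero.2 hqf.symm) (sub_ne_zero.2 hq1.ne')
  have hclass (a : ℕ) : ∑' k : ℕ, g (k * f + a + 1)
      = χ ((a + 1 : ℕ) : ZMod f) * ∑' m : ℕ, qTerm (q ^ f) (m + (a + 1 + x) / f) (qn q f * t) := by
    rw [← tsum_mul_left]
    refine tsum_congr fun k => ?_
    have hz : (k : ℝ) + (a + 1 + x) / f = ((k * f + a + 1 : ℕ) + x) / f := by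
      field_simp
      push_cast
      ring
    rw [hz, qTerm_pow_div hq0.le hf.ne' hqf]
    simp [g]
  calc _ = -t * ∑' n, g n := by simp only [g, qTerm, mul_assoc]
    _ = -t * ∑ a ∈ range f, ∑' k : ℕ, g (k * f + a + 1) := by
      rw [hg.tsum_eq_zero_add, hg0, zero_add,
        tsum_eq_sum_range_tsum_mul_add_s2 hf.ne' ((summable_nat_add_iff 1).2 hg)]
    _ = _ := by
      rw [sum_mul_Fgen_of_sum_eq_zero hχ, one_div, mul_neg, ← mul_assoc, ← mul_assoc,
        inv_mul_cancel₀ hqn, one_mul, neg_mul]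
      simp only [hclass]

/-- The generating function of the generalized q-Bernoulli polynomials attached to a
nontrivial Dirichlet character `χ` mod `f` is an average of `q^f`-Bernoulli generating
functions:
`-t·Σ_{n≥0} χ(n)·q^{n+x}·exp([n+x]_q·t) = (1/[f]_q)·Σ_{a=1}^{f} χ(a)·F_{q^f}((a+x)/f, [f]_q·t)`. -/
theorem generalized_qBernoulli_generating_function (q : ℝ) (hq0 : 0 < q) (hq1 : q < 1)
    (f : ℕ) (hf : 0 < f) (χ : DirichletCharacter ℂ f)
    (hχ : ∑ a ∈ range f, χ ((a + 1 : ℕ) : ZMod f) = 0)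
    (x : ℝ) (hx : 0 ≤ x) (t : ℂ) :
    -t * ∑' m : ℕ, χ (m : ZMod f) * ((q ^ ((m : ℝ) + x) : ℝ) : ℂ)
        * Complex.exp (((qn q ((m : ℝ) + x) : ℝ) : ℂ) * t)
      = (1 / ((qn q (f : ℝ) : ℝ) : ℂ))
        * ∑ a ∈ range f, χ ((a + 1 : ℕ) : ZMod f)
          * Fgen (q ^ f) (((a : ℝ) + 1 + x) / (f : ℝ)) (((qn q (f : ℝ) : ℝ) : ℂ) * t) :=
  generalized_qBernoulli_generating_function_general q hq0 hq1 f hf χ hχ x t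
end

section
/- Let q be a real number with 0 < q < 1, let r ≥ 1 be an integer, let f be a positive integer and χ a complex Dirichlet character modulo f. Then for every complex number s, the multiple q-L-function satisfies L_{q,r}(s, χ) = [f]_q^{−s} · Σ_{a₁,…,a_r = 1}^{f} χ(a₁)·χ(a₂)···χ(a_r) · ζ_{q^f,r}( s , (a₁+…+a_r)/f | 1,…,1 ), where on the right the multiple q-zeta function is formed with q replaced by q^f. -/
/-!
Write the summation indices as `nᵢ = aᵢ + f mᵢ` with `1 ≤ aᵢ ≤ f` and `mᵢ ≥ 0` (the
definitions use `νᵢ = nᵢ - 1`, which is split into a residue in `Fin f` and a quotient).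
The character only sees the residues, and `n₁ + … + n_r = f (w + m₁ + … + m_r)` with
`w = (a₁ + … + a_r)/f`, so `q^N = (q^f)^(w + Σ mᵢ)` and `[f y]_q = [f]_q [y]_{q^f}` factor
each term. The series converges absolutely (its terms are `O(q^N)`, because
`1 ≤ [N]_q ≤ (1 - q)⁻¹`), which justifies regrouping it over residue classes.
-/

open Finset

/-- The complex power `r^s := exp(s·log r)` of a positive real `r` (real logarithm). -/
noncomputable def rpowC (r : ℝ) (s : ℂ) : ℂ := Complex.exp (s * (Real.log r : ℂ))

/-- The Barnes-type Changhee multiple q-zeta function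
`ζ_{Q,r}(s,w|w₁,…,w_r) = (Π wᵢ)·Σ_{ν} Q^{w+Σ wᵢνᵢ}/[w+Σ wᵢνᵢ]_Q^s`. -/
noncomputable def multZeta (Q : ℝ) (r : ℕ) (w : ℝ) (ws : Fin r → ℝ) (s : ℂ) : ℂ :=
  ((∏ i, ws i : ℝ) : ℂ) * ∑' ν : Fin r → ℕ,
    ((Q ^ (w + ∑ i, ws i * (ν i : ℝ)) : ℝ) : ℂ)
      / rpowC (qn Q (w + ∑ i, ws i * (ν i : ℝ))) s

/-- The multiple q-L-function
`L_{q,r}(s,χ) = Σ_{n₁,…,n_r ≥ 1} χ(n₁)···χ(n_r)·q^{n₁+…+n_r}/[n₁+…+n_r]_q^s`. -/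
noncomputable def multL (q : ℝ) (r : ℕ) {f : ℕ} (χ : DirichletCharacter ℂ f) (s : ℂ) : ℂ :=
  ∑' ν : Fin r → ℕ, (∏ k, χ ((ν k + 1 : ℕ) : ZMod f))
    * ((q ^ (∑ i, ((ν i : ℝ) + 1)) : ℝ) : ℂ) / rpowC (qn q (∑ i, ((ν i : ℝ) + 1))) s

lemma rpowC_ne_zero (x : ℝ) (s : ℂ) : rpowC x s ≠ 0 := Complex.exp_ne_zero _

lemma rpowC_neg (x : ℝ) (s : ℂ) : rpowC x (-s) = (rpowC x s)⁻¹ := by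
  rw [rpowC, rpowC, ← Complex.exp_neg, neg_mul]

lemma rpowC_mul {x y : ℝ} (hx : x ≠ 0) (hy : y ≠ 0) (s : ℂ) :
    rpowC (x * y) s = rpowC x s * rpowC y s := by
  rw [rpowC, rpowC, rpowC, Real.log_mul hx hy, ← Complex.exp_add]
  push_cast
  ring_nf

lemma norm_rpowC (x : ℝ) (s : ℂ) : ‖rpowC x s‖ = Real.exp (s.re * Real.log x) := by
  simp [rpowC, Complex.norm_exp, Complex.mul_re]

lemma norm_rpowC_inv_le {x M : ℝ} (hx : 1 ≤ x) (hxM : x ≤ M) (s : ℂ) :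
    ‖(rpowC x s)⁻¹‖ ≤ Real.exp (|s.re| * Real.log M) := by
  have hlog : 0 ≤ Real.log x := Real.log_nonneg hx
  have hlogM : Real.log x ≤ Real.log M := Real.log_le_log (by linarith) hxM
  rw [norm_inv, norm_rpowC, ← Real.exp_neg, Real.exp_le_exp]
  nlinarith [neg_abs_le s.re, abs_nonneg s.re]

lemma qn_ne_zero {q z : ℝ} (hq0 : 0 < q) (hq1 : q < 1) (hz : 0 < z) : qn q z ≠ 0 :=
  div_ne_zero (sub_ne_zero.2 (Real.rpow_lt_one hq0.le hq1 hz).ne') (sub_ne_zero.2 hq1.ne')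

lemma one_le_qn {q z : ℝ} (hq0 : 0 < q) (hq1 : q < 1) (hz : 1 ≤ z) : 1 ≤ qn q z := by
  have : q ^ z ≤ q := by simpa using Real.rpow_le_rpow_of_exponent_ge hq0 hq1.le hz
  rw [qn, le_div_iff₀ (by linarith)]
  linarith

lemma qn_natCast_mul {q : ℝ} (hq0 : 0 < q) (hq1 : q < 1) {n : ℕ} (hn : n ≠ 0) (z : ℝ) :
    qn q (n * z) = qn q n * qn (q ^ n) z := by
  have hqn : 1 - q ^ n ≠ 0 := sub_ne_zero.2 (pow_lt_one₀ hq0.le hq1 hn).ne'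
  rw [qn, qn, qn, Real.rpow_mul hq0.le, Real.rpow_natCast]
  field_simp

lemma summable_geometric_pi {q : ℝ} (hq0 : 0 ≤ q) (hq1 : q < 1) (r : ℕ) :
    Summable fun ν : Fin r → ℕ => q ^ (∑ i, ν i) := by
  induction r with
  | zero => exact .of_finite
  | succ n ih =>
    rw [← (Fin.consEquiv fun _ => ℕ).summable_iff]
    refine ((summable_geometric_of_lt_one hq0 hq1).mul_of_nonneg ih
      (fun k => pow_nonneg hq0 k) (fun ν => pow_nonneg hq0 _)).congr fun p => ?_
    simp [Fin.consEquiv, Fin.sum_cons, pow_add]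

lemma sum_add_one_eq_natCast {r : ℕ} (ν : Fin r → ℕ) :
    ∑ i, ((ν i : ℝ) + 1) = ((∑ i, ν i + r : ℕ) : ℝ) := by
  push_cast
  simp [sum_add_distrib]

lemma summable_multL_summand {q : ℝ} (hq0 : 0 < q) (hq1 : q < 1) {r : ℕ} (hr : 1 ≤ r)
    {f : ℕ} (χ : DirichletCharacter ℂ f) (s : ℂ) :
    Summable fun ν : Fin r → ℕ => (∏ k, χ ((ν k + 1 : ℕ) : ZMod f))
      * ((q ^ (∑ i, ((ν i : ℝ) + 1)) : ℝ) : ℂ) / rpowC (qn q (∑ i, ((ν i : ℝ) + 1))) s := by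
  set C := Real.exp (|s.re| * Real.log (1 - q)⁻¹)
  refine Summable.of_norm_bounded ((summable_geometric_pi hq0.le hq1 r).mul_left (C * q ^ r))
    fun ν => ?_
  have hX : 1 ≤ ∑ i, ((ν i : ℝ) + 1) := by
    rw [sum_add_one_eq_natCast]
    exact_mod_cast (by omega : 1 ≤ ∑ i, ν i + r)
  have hχ : ‖∏ k, χ ((ν k + 1 : ℕ) : ZMod f)‖ ≤ 1 := by
    rw [norm_prod]
    exact prod_le_one (fun _ _ => norm_nonneg _) fun _ _ => χ.norm_le_one _
  have hden := norm_rpowC_inv_le (one_le_qn hq0 hq1 hX) (qn_le_inv_one_sub hq0.le hq1 _) s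
  have hqX : q ^ (∑ i, ((ν i : ℝ) + 1)) = q ^ r * q ^ (∑ i, ν i) := by
    rw [sum_add_one_eq_natCast, Real.rpow_natCast, pow_add, mul_comm]
  rw [div_eq_mul_inv, norm_mul, norm_mul, Complex.norm_real,
    Real.norm_of_nonneg (Real.rpow_nonneg hq0.le _)]
  calc _ ≤ 1 * q ^ (∑ i, ((ν i : ℝ) + 1)) * C := by gcongr
    _ = _ := by rw [hqX]; ring

def residueQuotientEquiv (f r : ℕ) (hf : 0 < f) :
    (Fin r → Fin f) × (Fin r → ℕ) ≃ (Fin r → ℕ) where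
  toFun p i := p.1 i + f * p.2 i
  invFun ν := (fun i => ⟨ν i % f, Nat.mod_lt _ hf⟩, fun i => ν i / f)
  left_inv p := by
    refine Prod.ext (funext fun i => Fin.ext ?_) (funext fun i => ?_)
    · simp [Nat.mod_eq_of_lt (p.1 i).isLt]
    · simp [Nat.add_mul_div_left _ _ hf, Nat.div_eq_of_lt (p.1 i).isLt]
  right_inv ν := funext fun i => Nat.mod_add_div (ν i) f

lemma qpow_div_rpowC_qn_natCast_mul {q : ℝ} (hq0 : 0 < q) (hq1 : q < 1) {n : ℕ} (hn : n ≠ 0)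
    {z : ℝ} (hz : 0 < z) (s : ℂ) :
    ((q ^ (n * z) : ℝ) : ℂ) / rpowC (qn q (n * z)) s
      = rpowC (qn q n) (-s) * (((q ^ n) ^ z : ℝ) : ℂ) / rpowC (qn (q ^ n) z) s := by
  have hqn0 : 0 < q ^ n := pow_pos hq0 n
  have hqn1 : q ^ n < 1 := pow_lt_one₀ hq0.le hq1 hn
  rw [qn_natCast_mul hq0 hq1 hn, rpowC_mul (qn_ne_zero hq0 hq1 (by positivity))
    (qn_ne_zero hqn0 hqn1 hz), rpowC_neg, Real.rpow_mul hq0.le, Real.rpow_natCast]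
  field_simp [rpowC_ne_zero]

lemma sum_residue_add_mul_add_one {r f : ℕ} (hf : 0 < f) (a : Fin r → Fin f) (m : Fin r → ℕ) :
    ∑ i, (((a i + f * m i : ℕ) : ℝ) + 1)
      = f * ((∑ i, (((a i : ℕ) : ℝ) + 1)) / f + ∑ i, (m i : ℝ)) := by
  have hf' : (f : ℝ) ≠ 0 := by positivity
  push_cast
  rw [mul_add, mul_div_cancel₀ _ hf', mul_sum, ← sum_add_distrib]
  exact sum_congr rfl fun i _ => by ring

lemma tsum_multL_summand_residue {q : ℝ} (hq0 : 0 < q) (hq1 : q < 1) {r : ℕ} (hr : 1 ≤ r)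
    {f : ℕ} (hf : 0 < f) (χ : DirichletCharacter ℂ f) (s : ℂ) (a : Fin r → Fin f) :
    ∑' m : Fin r → ℕ, (∏ k, χ ((a k + f * m k + 1 : ℕ) : ZMod f))
        * ((q ^ (∑ i, (((a i + f * m i : ℕ) : ℝ) + 1)) : ℝ) : ℂ)
        / rpowC (qn q (∑ i, (((a i + f * m i : ℕ) : ℝ) + 1))) s
      = rpowC (qn q f) (-s) * ((∏ k, χ (((a k : ℕ) + 1 : ℕ) : ZMod f))
        * multZeta (q ^ f) r ((∑ i, (((a i : ℕ) : ℝ) + 1)) / f) (fun _ => 1) s) := by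
  have hw : 0 < (∑ i, (((a i : ℕ) : ℝ) + 1)) / f := by
    have : Nonempty (Fin r) := Fin.pos_iff_nonempty.mp hr
    exact div_pos (sum_pos (fun i _ => by positivity) univ_nonempty) (by exact_mod_cast hf)
  have hχ (m : Fin r → ℕ) (k : Fin r) :
      χ ((a k + f * m k + 1 : ℕ) : ZMod f) = χ (((a k : ℕ) + 1 : ℕ) : ZMod f) := by
    simp
  have hterm (m : Fin r → ℕ) := qpow_div_rpowC_qn_natCast_mul hq0 hq1 hf.ne'
    (add_pos_of_pos_of_nonneg hw (sum_nonneg (s := univ) fun i _ => (m i).cast_nonneg (α := ℝ))) s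
  simp only [sum_residue_add_mul_add_one hf, hχ, mul_div_assoc, hterm, multZeta, prod_const_one,
    Complex.ofReal_one, one_mul]
  rw [tsum_mul_left, tsum_mul_left]
  ring

/-- Relation between the multiple q-L-function and the multiple q-zeta function formed
with `q^f`:
`L_{q,r}(s,χ) = [f]_q^{-s}·Σ_{a₁,…,a_r=1}^{f} χ(a₁)···χ(a_r)·ζ_{q^f,r}(s,(a₁+…+a_r)/f | 1,…,1)`. -/
theorem multL_eq_sum_multZeta (q : ℝ) (hq0 : 0 < q) (hq1 : q < 1)
    (r : ℕ) (hr : 1 ≤ r) (f : ℕ) (hf : 0 < f) (χ : DirichletCharacter ℂ f) (s : ℂ) :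
    multL q r χ s = rpowC (qn q (f : ℝ)) (-s)
      * ∑ a : Fin r → Fin f, (∏ k, χ (((a k : ℕ) + 1 : ℕ) : ZMod f))
        * multZeta (q ^ f) r ((∑ i, (((a i : ℕ) : ℝ) + 1)) / (f : ℝ)) (fun _ => 1) s := by
  have hsum := (residueQuotientEquiv f r hf).summable_iff.2 (summable_multL_summand hq0 hq1 hr χ s)
  simp only [Function.comp_def] at hsum
  rw [multL, ← (residueQuotientEquiv f r hf).tsum_eq, hsum.tsum_prod' hsum.prod_factor,
    tsum_fintype, mul_sum]
  exact sum_congr rfl fun a _ => tsum_multL_summand_residue hq0 hq1 hr hf χ s a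
end

section
/- Let q be a real number with 0 < q < 1, let r ≥ 1 be an integer, let w ≥ 0 and w₁,…,w_r > 0 be reals, and let u be a complex number with |u| < 1, u ≠ 1. Then for every integer n ≥ 0, the Euler–Barnes type multiple Daehee q-zeta function satisfies ζ_q(−n, w, u | w₁,…,w_r) = (1−u)^{−r} · H^{(r)}_n(u^{−1}, w : q | w₁,…,w_r), i.e. Σ_{n₁,…,n_r ≥ 0} u^{n₁+…+n_r} · [w + Σ_{i=1}^{r} w_i n_i]_q^{n} = (1−q)^{−n} · Σ_{l=0}^{n} C(n,l)·(−1)^l·q^{l·w} · Π_{i=1}^{r} (1 − u·q^{l·w_i})^{−1}. -/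
/-!
Expanding `[z]_q^n = (1 - q)^{-n} Σ_l C(n,l) (-1)^l q^{lz}` binomially and factoring
`q^{l(w + Σ wᵢnᵢ)} = q^{lw} Π (q^{lwᵢ})^{nᵢ}` turns every term of the `r`-fold series into a
finite combination of products of geometric sequences in the `nᵢ` with ratios `u q^{lwᵢ}`,
all of modulus `< 1`. Interchanging the finite and the absolutely convergent sums and summing
the `r` geometric series yields `Π (1 - u q^{lwᵢ})⁻¹`.
-/

open Finset

/-- The Euler–Barnes type multiple Daehee q-Euler polynomial
`H^{(r)}_n(u⁻¹,w:q|w₁,…,w_r) = (1-u)^r·(1-q)^{-n}·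
  Σ_{l=0}^{n} C(n,l)·(-1)^l·q^{l·w}·Π_{i=1}^{r} (1 - u·q^{l·wᵢ})⁻¹`. -/
noncomputable def multH (q : ℝ) (r : ℕ) (w : ℝ) (ws : Fin r → ℝ) (u : ℂ) (n : ℕ) : ℂ :=
  (1 - u) ^ r * (((1 - q : ℝ) : ℂ)⁻¹) ^ n *
    ∑ l ∈ range (n + 1), (n.choose l : ℂ) * (-1) ^ l * ((q ^ ((l : ℝ) * w) : ℝ) : ℂ)
      * ∏ i, (1 - u * ((q ^ ((l : ℝ) * ws i) : ℝ) : ℂ))⁻¹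

section PiProduct

variable {R κ : Type*} [NormedCommRing R]

theorem summable_norm_prod_pi {r : ℕ} {g : Fin r → κ → R}
    (hg : ∀ i, Summable fun k => ‖g i k‖) :
    Summable fun f : Fin r → κ => ‖∏ i, g i (f i)‖ := by
  induction r with
  | zero => exact Summable.of_finite
  | succ r ih =>
    rw [← (Fin.consEquiv fun _ => κ).summable_iff]
    simpa [Function.comp_def, Fin.consEquiv, Fin.prod_univ_succ] using
      (hg 0).mul_norm (ih fun i => hg i.succ)

theorem tsum_prod_pi [CompleteSpace R] {r : ℕ} {g : Fin r → κ → R}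
    (hg : ∀ i, Summable fun k => ‖g i k‖) :
    ∑' f : Fin r → κ, ∏ i, g i (f i) = ∏ i, ∑' k, g i k := by
  induction r with
  | zero => simp
  | succ r ih =>
    rw [← (Fin.consEquiv fun _ => κ).tsum_eq, Fin.prod_univ_succ, ← ih fun i => hg i.succ,
      tsum_mul_tsum_of_summable_norm (hg 0) (summable_norm_prod_pi fun i => hg i.succ)]
    simp [Fin.consEquiv, Fin.prod_univ_succ]

end PiProduct

section MultipleGeometric

variable {𝕜 : Type*} [NormedField 𝕜] [CompleteSpace 𝕜] {r : ℕ} {x : Fin r → 𝕜}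

theorem summable_prod_pow (hx : ∀ i, ‖x i‖ < 1) :
    Summable fun ν : Fin r → ℕ => ∏ i, x i ^ ν i :=
  (summable_norm_prod_pi fun i => summable_norm_geometric_of_norm_lt_one (hx i)).of_norm

theorem tsum_prod_pow (hx : ∀ i, ‖x i‖ < 1) :
    ∑' ν : Fin r → ℕ, ∏ i, x i ^ ν i = ∏ i, (1 - x i)⁻¹ := by
  rw [tsum_prod_pi fun i => summable_norm_geometric_of_norm_lt_one (hx i)]
  exact prod_congr rfl fun i _ => tsum_geometric_of_norm_lt_one (hx i)

end MultipleGeometric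

theorem qn_pow_eq_sum (q z : ℝ) (n : ℕ) :
    qn q z ^ n = (1 - q)⁻¹ ^ n * ∑ l ∈ range (n + 1), n.choose l * (-1) ^ l * (q ^ z) ^ l := by
  have hbinom : (1 - q ^ z) ^ n = ∑ l ∈ range (n + 1), n.choose l * (-1) ^ l * (q ^ z) ^ l := by
    rw [sub_eq_neg_add, add_pow]
    exact sum_congr rfl fun l _ => by rw [neg_pow]; ring
  rw [qn, div_pow, hbinom, div_eq_inv_mul, inv_pow]

theorem Real.rpow_add_sum_mul_pow {q : ℝ} (hq : 0 < q) {ι : Type*} (s : Finset ι) (w : ℝ)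
    (a : ι → ℝ) (ν : ι → ℕ) (l : ℕ) :
    (q ^ (w + ∑ i ∈ s, a i * ν i)) ^ l = q ^ (l * w) * ∏ i ∈ s, (q ^ (l * a i)) ^ ν i := by
  simp only [← Real.rpow_natCast, ← Real.rpow_mul hq.le]
  rw [mul_comm, mul_add, mul_sum, Real.rpow_add hq, Real.rpow_sum_of_pos hq]
  congr 1
  exact prod_congr rfl fun i _ => by ring_nf

theorem norm_mul_rpow_lt_one {u : ℂ} (hu : ‖u‖ < 1) {q : ℝ} (hq0 : 0 < q) (hq1 : q ≤ 1)
    {t : ℝ} (ht : 0 ≤ t) : ‖u * ((q ^ t : ℝ) : ℂ)‖ < 1 := by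
  rw [norm_mul, Complex.norm_real, Real.norm_of_nonneg (Real.rpow_nonneg hq0.le t)]
  exact (mul_le_of_le_one_right (norm_nonneg u) (Real.rpow_le_one hq0.le hq1 ht)).trans_lt hu

theorem daehee_term_eq_sum {q : ℝ} (hq : 0 < q) {r : ℕ} (w : ℝ) (ws : Fin r → ℝ) (u : ℂ)
    (n : ℕ) (ν : Fin r → ℕ) :
    u ^ (∑ i, ν i) * ((qn q (w + ∑ i, ws i * (ν i : ℝ)) ^ n : ℝ) : ℂ)
      = ∑ l ∈ range (n + 1), (((1 - q : ℝ) : ℂ)⁻¹) ^ n * (n.choose l : ℂ) * (-1) ^ l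
          * ((q ^ ((l : ℝ) * w) : ℝ) : ℂ) * ∏ i, (u * ((q ^ ((l : ℝ) * ws i) : ℝ) : ℂ)) ^ ν i := by
  simp only [qn_pow_eq_sum, Real.rpow_add_sum_mul_pow hq, ← prod_pow_eq_pow_sum, mul_pow,
    prod_mul_distrib]
  push_cast
  rw [mul_sum, mul_sum]
  exact sum_congr rfl fun l _ => by ring

theorem multiple_daehee_qZeta_neg_int_general (q : ℝ) (hq0 : 0 < q) (hq1 : q < 1)
    (r : ℕ) (w : ℝ) (ws : Fin r → ℝ) (hws : ∀ i, 0 < ws i)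
    (u : ℂ) (hu : ‖u‖ < 1) (n : ℕ) :
    ∑' ν : Fin r → ℕ, u ^ (∑ i, ν i)
        * ((qn q (w + ∑ i, ws i * (ν i : ℝ)) ^ n : ℝ) : ℂ)
      = ((1 - u) ^ r)⁻¹ * multH q r w ws u n := by
  have hx : ∀ (l : ℕ) i, ‖u * ((q ^ ((l : ℝ) * ws i) : ℝ) : ℂ)‖ < 1 := fun l i =>
    norm_mul_rpow_lt_one hu hq0 hq1.le (mul_nonneg l.cast_nonneg (hws i).le)
  have h1u : (1 - u) ^ r ≠ 0 := pow_ne_zero _ (sub_ne_zero.2 fun h => by simp [← h] at hu)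
  rw [tsum_congr (daehee_term_eq_sum hq0 w ws u n),
    Summable.tsum_finsetSum fun l _ => (summable_prod_pow (hx l)).mul_left _]
  simp only [tsum_mul_left, tsum_prod_pow (hx _)]
  rw [multH, ← mul_assoc, ← mul_assoc, inv_mul_cancel₀ h1u, one_mul, mul_sum]
  exact sum_congr rfl fun l _ => by ring

/-- The Euler–Barnes type multiple Daehee q-zeta function
`ζ_q(-n,w,u|w₁,…,w_r) = Σ_{n₁,…,n_r ≥ 0} u^{n₁+…+n_r}·[w+Σ wᵢnᵢ]_q^n` interpolates the
Euler–Barnes type multiple Daehee q-Euler polynomials: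
`ζ_q(-n,w,u|w₁,…,w_r) = (1-u)^{-r}·H^{(r)}_n(u⁻¹,w:q|w₁,…,w_r)`. -/
theorem multiple_daehee_qZeta_neg_int (q : ℝ) (hq0 : 0 < q) (hq1 : q < 1)
    (r : ℕ) (hr : 1 ≤ r) (w : ℝ) (hw : 0 ≤ w) (ws : Fin r → ℝ) (hws : ∀ i, 0 < ws i)
    (u : ℂ) (hu : ‖u‖ < 1) (hu1 : u ≠ 1) (n : ℕ) :
    ∑' ν : Fin r → ℕ, u ^ (∑ i, ν i)
        * ((qn q (w + ∑ i, ws i * (ν i : ℝ)) ^ n : ℝ) : ℂ)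
      = ((1 - u) ^ r)⁻¹ * multH q r w ws u n :=
  multiple_daehee_qZeta_neg_int_general q hq0 hq1 r w ws hws u hu n
end

section
/- Let q be a real number with 0 < q < 1, let w₁ > 0 be real, and let u be a complex number with |u| < 1. Then for every integer n ≥ 0, the generating series of Euler–Barnes type Daehee q-Euler numbers evaluates in closed form: (1−u) · Σ_{m=0}^{∞} u^m · [w₁·m]_q^{n} = (1−u)·(1−q)^{−n} · Σ_{l=0}^{n} C(n,l)·(−1)^l / (1 − q^{w₁·l}·u), i.e. the n-th coefficient H_n(u^{−1} : q | w₁) of the series (1−u)·Σ_{m≥0} u^m·exp([w₁m]_q·t) equals (1−u)·(1−q)^{−n}·Σ_{l=0}^{n} C(n,l)·(−1)^l/(1 − q^{w₁l}·u). -/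
open Finset

/-!
Since `q ^ (w₁ m) = r ^ m` with `r = q ^ w₁ ∈ (0, 1]`, the binomial theorem writes
`[w₁ m]_q ^ n = (1 - q)⁻ⁿ ∑ₗ C(n,l) (-1)ˡ (r ^ l) ^ m`; summing against `u ^ m` turns each of
the finitely many terms into a geometric series in `r ^ l u`.
-/

theorem one_sub_pow_eq_sum {R : Type*} [CommRing R] (x : R) (n : ℕ) :
    (1 - x) ^ n = ∑ l ∈ range (n + 1), (n.choose l : R) * (-1) ^ l * x ^ l := by
  rw [sub_eq_add_neg, add_comm, add_pow]
  refine sum_congr rfl fun l _ => ?_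
  rw [neg_pow]
  ring

theorem hasSum_pow_mul_one_sub_pow {K : Type*} [NormedField K] {u r : K}
    (hr : ‖r‖ ≤ 1) (hu : ‖u‖ < 1) (n : ℕ) :
    HasSum (fun m : ℕ => u ^ m * (1 - r ^ m) ^ n)
      (∑ l ∈ range (n + 1), (n.choose l : K) * (-1) ^ l / (1 - r ^ l * u)) := by
  have hratio : ∀ l : ℕ, ‖r ^ l * u‖ < 1 := fun l =>
    calc ‖r ^ l * u‖ = ‖r‖ ^ l * ‖u‖ := by rw [norm_mul, norm_pow]
      _ ≤ ‖u‖ := mul_le_of_le_one_left (norm_nonneg u) (pow_le_one₀ (norm_nonneg r) hr)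
      _ < 1 := hu
  have hterm : (fun m : ℕ => u ^ m * (1 - r ^ m) ^ n)
      = fun m => ∑ l ∈ range (n + 1), (n.choose l : K) * (-1) ^ l * (r ^ l * u) ^ m := by
    funext m
    rw [one_sub_pow_eq_sum, mul_sum]
    refine sum_congr rfl fun l _ => ?_
    rw [mul_pow, ← pow_mul, ← pow_mul, mul_comm l m]
    ring
  rw [hterm]
  refine hasSum_sum fun l _ => ?_
  simpa only [div_eq_mul_inv] using
    (hasSum_geometric_of_norm_lt_one (hratio l)).mul_left ((n.choose l : K) * (-1) ^ l)

/-- Closed form for the Euler–Barnes type Daehee q-Euler numbers: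
`(1-u)·Σ_{m≥0} u^m·[w₁m]_q^n = (1-u)·(1-q)^{-n}·Σ_{l=0}^{n} C(n,l)·(-1)^l/(1 - q^{w₁l}·u)`. -/
theorem daehee_qEuler_number_closed_form (q w1 : ℝ) (hq0 : 0 < q) (hq1 : q < 1)
    (hw1 : 0 < w1) (u : ℂ) (hu : ‖u‖ < 1) (n : ℕ) :
    (1 - u) * ∑' m : ℕ, u ^ m * ((qn q (w1 * (m : ℝ)) ^ n : ℝ) : ℂ)
      = (1 - u) * (((1 - q : ℝ) : ℂ)⁻¹) ^ n
        * ∑ l ∈ range (n + 1), (n.choose l : ℂ) * (-1) ^ l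
            / (1 - ((q ^ (w1 * (l : ℝ)) : ℝ) : ℂ) * u) := by
  set r : ℂ := ((q ^ w1 : ℝ) : ℂ)
  have hpow (k : ℕ) : ((q ^ (w1 * (k : ℝ)) : ℝ) : ℂ) = r ^ k := by
    rw [Real.rpow_mul_natCast hq0.le, Complex.ofReal_pow]
  have hr : ‖r‖ ≤ 1 := by
    rw [Complex.norm_real, Real.norm_of_nonneg (by positivity)]
    exact Real.rpow_le_one hq0.le hq1.le hw1.le
  have hqn (m : ℕ) : ((qn q (w1 * (m : ℝ)) ^ n : ℝ) : ℂ)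
      = (((1 - q : ℝ) : ℂ)⁻¹) ^ n * (1 - r ^ m) ^ n := by
    rw [qn, div_eq_inv_mul, mul_pow, ← hpow]
    norm_cast
  simp only [hqn, hpow, mul_left_comm (u ^ _), tsum_mul_left,
    (hasSum_pow_mul_one_sub_pow hr hu n).tsum_eq, mul_assoc]
end
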